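/- Let κ, τ : I → ℝ be differentiable with κ nowhere zero, θ a real constant, and define k̄ = κ cos θ + τ sin θ, τ̄ = -κ sin θ + τ cos θ, with k̄ nowhere zero. Then κ² + τ² = k̄² + τ̄² and (κ²/(κ² + τ²)^{3/2}) · (τ/κ)' = (k̄²/(k̄² + τ̄²)^{3/2}) · (τ̄/k̄)' on I. -/

import Mathlib

/-!
Write `W(f, g) = g' f - g f'`, so that `f² (g / f)' = W(f, g)`. Rotating the pair `(κ, τ)` by the
constant angle `θ` preserves both `κ² + τ²` and the Wronskian `W(κ, τ)`, hence it preserves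
`κ² (τ / κ)' / (κ² + τ²) ^ (3 / 2)`.
-/

open Real Filter Topology

lemma rotate_sq_add_sq (a b θ : ℝ) :
    (a * cos θ + b * sin θ) ^ 2 + (-a * sin θ + b * cos θ) ^ 2 = a ^ 2 + b ^ 2 := by
  linear_combination (a ^ 2 + b ^ 2) * sin_sq_add_cos_sq θ

lemma rotate_wronskian (a b a' b' θ : ℝ) :
    (-a' * sin θ + b' * cos θ) * (a * cos θ + b * sin θ)
      - (-a * sin θ + b * cos θ) * (a' * cos θ + b' * sin θ) = b' * a - b * a' := by
  linear_combination (b' * a - b * a') * sin_sq_add_cos_sq θ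

lemma sq_mul_deriv_div {f g : ℝ → ℝ} {f' g' x : ℝ} (hf : HasDerivAt f f' x)
    (hg : HasDerivAt g g' x) (hx : f x ≠ 0) :
    f x ^ 2 * deriv (fun t => g t / f t) x = g' * f x - g x * f' := by
  rw [(hg.fun_div hf hx).deriv]
  field_simp

/-- Corollary 5.2, eq. (94): invariance of the Euclidean-signature slant-helix
function under plane rotation. -/
theorem stmt_10 (I : Set ℝ) (hI : IsOpen I) (κ τ kb tb : ℝ → ℝ) (θ : ℝ)
    (hκd : ∀ s ∈ I, DifferentiableAt ℝ κ s)
    (hτd : ∀ s ∈ I, DifferentiableAt ℝ τ s)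
    (hκ : ∀ s ∈ I, κ s ≠ 0)
    (hkb : ∀ s ∈ I, kb s = κ s * Real.cos θ + τ s * Real.sin θ)
    (htb : ∀ s ∈ I, tb s = -κ s * Real.sin θ + τ s * Real.cos θ)
    (hkb0 : ∀ s ∈ I, kb s ≠ 0) :
    ∀ s ∈ I,
      κ s ^ 2 + τ s ^ 2 = kb s ^ 2 + tb s ^ 2 ∧
      κ s ^ 2 / (κ s ^ 2 + τ s ^ 2) ^ ((3 : ℝ) / 2) *
        deriv (fun t => τ t / κ t) s =
      kb s ^ 2 / (kb s ^ 2 + tb s ^ 2) ^ ((3 : ℝ) / 2) *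
        deriv (fun t => tb t / kb t) s := by
  intro s hs
  have hsum : κ s ^ 2 + τ s ^ 2 = kb s ^ 2 + tb s ^ 2 := by
    rw [hkb s hs, htb s hs, rotate_sq_add_sq]
  have hκ' := (hκd s hs).hasDerivAt
  have hτ' := (hτd s hs).hasDerivAt
  have hkb' : HasDerivAt kb (deriv κ s * cos θ + deriv τ s * sin θ) s :=
    ((hκ'.mul_const _).add (hτ'.mul_const _)).congr_of_eventuallyEq <|
      eventually_of_mem (hI.mem_nhds hs) hkb
  have htb' : HasDerivAt tb (-deriv κ s * sin θ + deriv τ s * cos θ) s :=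
    ((hκ'.neg.mul_const _).add (hτ'.mul_const _)).congr_of_eventuallyEq <|
      eventually_of_mem (hI.mem_nhds hs) htb
  refine ⟨hsum, ?_⟩
  rw [div_mul_eq_mul_div, div_mul_eq_mul_div, sq_mul_deriv_div hκ' hτ' (hκ s hs),
    sq_mul_deriv_div hkb' htb' (hkb0 s hs), ← hsum, hkb s hs, htb s hs, rotate_wronskian]
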